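/- arXiv:2212.05727 — 2 statements merged into one kernel-verified Lean document; each statement's English description precedes it below -/
import Mathlib

section
/- Let X be a nonempty type and f, g : X → ℝ. Define the Lagrangian L(x, λ) = f(x) + λ·g(x) and, for κ ≥ 0, the penalized objective ℓ(x) = f(x) + κ·max(0, g(x)). Suppose (x*, λ*) with λ* ≥ 0 is a saddle point of L, i.e., L(x*, λ) ≤ L(x*, λ*) ≤ L(x, λ*) for all x ∈ X and all λ ≥ 0. If κ ≥ λ*, then x* is a global minimizer of ℓ, i.e., ℓ(x*) ≤ ℓ(x) for all x ∈ X, and moreover ℓ(x*) = L(x*, λ*) = f(x*). -/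
/-!
Letting `λ → ∞` in the first saddle inequality forces feasibility `g x* ≤ 0`, and `λ = 0` gives
complementary slackness `λ* g x* = 0`, so `ℓ x* = L(x*, λ*) = f x*`. Since `0 ≤ λ* ≤ κ`, the
Lagrangian term `λ* g x` never exceeds the penalty `κ max(0, g x)`, hence
`ℓ x* = L(x*, λ*) ≤ L(x, λ*) ≤ ℓ x`.
-/

theorem nonpos_of_forall_nonneg_mul_le {a c : ℝ} (h : ∀ l : ℝ, 0 ≤ l → l * c ≤ a * c) :
    c ≤ 0 := by
  have := h (|a| + 1) (by positivity)
  nlinarith [le_abs_self a]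

theorem mul_eq_zero_of_forall_nonneg_mul_le {a c : ℝ} (ha : 0 ≤ a)
    (h : ∀ l : ℝ, 0 ≤ l → l * c ≤ a * c) : a * c = 0 :=
  le_antisymm (mul_nonpos_of_nonneg_of_nonpos ha (nonpos_of_forall_nonneg_mul_le h))
    (by simpa using h 0 le_rfl)

theorem mul_le_mul_max_zero {a κ : ℝ} (ha : 0 ≤ a) (haκ : a ≤ κ) (t : ℝ) :
    a * t ≤ κ * max 0 t := by
  rcases le_or_gt t 0 with ht | ht
  · simpa [max_eq_left ht] using mul_nonpos_of_nonneg_of_nonpos ha ht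
  · rw [max_eq_right ht.le]
    exact mul_le_mul_of_nonneg_right haκ ht.le

theorem exact_penalty_saddle_point_general
    {X : Type*} (f g : X → ℝ) (κ : ℝ)
    (xs : X) (ls : ℝ) (hls : 0 ≤ ls)
    (hsaddle₁ : ∀ l : ℝ, 0 ≤ l → f xs + l * g xs ≤ f xs + ls * g xs)
    (hsaddle₂ : ∀ x : X, f xs + ls * g xs ≤ f x + ls * g x)
    (hκls : ls ≤ κ) :
    (∀ x : X, f xs + κ * max 0 (g xs) ≤ f x + κ * max 0 (g x)) ∧
      f xs + κ * max 0 (g xs) = f xs + ls * g xs ∧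
      f xs + ls * g xs = f xs := by
  have hdual : ∀ l : ℝ, 0 ≤ l → l * g xs ≤ ls * g xs :=
    fun l hl => le_of_add_le_add_left (hsaddle₁ l hl)
  have hfeasible : g xs ≤ 0 := nonpos_of_forall_nonneg_mul_le hdual
  have hslack : ls * g xs = 0 := mul_eq_zero_of_forall_nonneg_mul_le hls hdual
  have hpenalty : f xs + κ * max 0 (g xs) = f xs + ls * g xs := by
    rw [max_eq_left hfeasible, hslack, mul_zero]
  have hlagrangian : f xs + ls * g xs = f xs := by rw [hslack, add_zero]
  refine ⟨fun x => ?_, hpenalty, hlagrangian⟩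
  calc f xs + κ * max 0 (g xs) = f xs + ls * g xs := hpenalty
    _ ≤ f x + ls * g x := hsaddle₂ x
    _ ≤ f x + κ * max 0 (g x) := add_le_add_right (mul_le_mul_max_zero hls hκls (g x)) _

/-- Proposition 2 (exact penalty): if `(x*, λ*)` with `λ* ≥ 0` is a saddle
point of the Lagrangian `L(x, λ) = f(x) + λ·g(x)` and the penalty factor
satisfies `κ ≥ λ*`, then `x*` globally minimizes the penalized objective
`ℓ(x) = f(x) + κ·max(0, g(x))`, and `ℓ(x*) = L(x*, λ*) = f(x*)`. -/
theorem exact_penalty_saddle_point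
    {X : Type*} [Nonempty X] (f g : X → ℝ) (κ : ℝ) (hκ : 0 ≤ κ)
    (xs : X) (ls : ℝ) (hls : 0 ≤ ls)
    (hsaddle₁ : ∀ l : ℝ, 0 ≤ l → f xs + l * g xs ≤ f xs + ls * g xs)
    (hsaddle₂ : ∀ x : X, f xs + ls * g xs ≤ f x + ls * g x)
    (hκls : ls ≤ κ) :
    (∀ x : X, f xs + κ * max 0 (g xs) ≤ f x + κ * max 0 (g x)) ∧
      f xs + κ * max 0 (g xs) = f xs + ls * g xs ∧
      f xs + ls * g xs = f xs :=
  exact_penalty_saddle_point_general f g κ xs ls hls hsaddle₁ hsaddle₂ hκls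
end

section
/- Let X be a nonempty type and f, g : X → ℝ, with Lagrangian L(x, λ) = f(x) + λ·g(x) and, for κ ≥ 0, penalized objective ℓ(x) = f(x) + κ·max(0, g(x)). Suppose (x*, λ*) with λ* ≥ 0 is a saddle point of L (L(x*, λ) ≤ L(x*, λ*) ≤ L(x, λ*) for all x and all λ ≥ 0) and κ ≥ λ*. Then the optimal values coincide: ⨅_{x ∈ X} ℓ(x) = L(x*, λ*) = f(x*), and the infimum of ℓ is attained at x*. -/
/-!
Testing the first saddle inequality at `λ = 0` and at `λ = λ* + 1` shows that `x*` is feasible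
and satisfies complementary slackness, so `L(x*, λ*) = f(x*) = ℓ(x*)`. For every `x`,
`λ* g(x) ≤ κ max(0, g(x))` because `0 ≤ λ* ≤ κ`, hence `ℓ(x) ≥ L(x, λ*) ≥ L(x*, λ*)` by the second
saddle inequality: `f(x*)` is the least value of `ℓ`.
-/

theorem mul_le_mul_max_zero_s10 {l κ t : ℝ} (hl : 0 ≤ l) (hlκ : l ≤ κ) : l * t ≤ κ * max 0 t :=
  calc l * t ≤ l * max 0 t := mul_le_mul_of_nonneg_left (le_max_right 0 t) hl
    _ ≤ κ * max 0 t := mul_le_mul_of_nonneg_right hlκ (le_max_left 0 t)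

theorem nonpos_and_mul_eq_zero_of_forall_mul_le {ls a : ℝ} (hls : 0 ≤ ls)
    (h : ∀ l : ℝ, 0 ≤ l → l * a ≤ ls * a) : a ≤ 0 ∧ ls * a = 0 := by
  have ha : a ≤ 0 := by linarith [h (ls + 1) (by linarith)]
  refine ⟨ha, le_antisymm (mul_nonpos_of_nonneg_of_nonpos hls ha) ?_⟩
  simpa using h 0 le_rfl

section Saddle

variable {X : Type*} {f g : X → ℝ} {xs : X} {ls : ℝ}

theorem saddle_feasible_and_slack (hls : 0 ≤ ls)
    (hsaddle₁ : ∀ l : ℝ, 0 ≤ l → f xs + l * g xs ≤ f xs + ls * g xs) :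
    g xs ≤ 0 ∧ ls * g xs = 0 :=
  nonpos_and_mul_eq_zero_of_forall_mul_le hls fun l hl => by linarith [hsaddle₁ l hl]

theorem isLeast_range_exact_penalty {κ : ℝ} (hls : 0 ≤ ls)
    (hsaddle₁ : ∀ l : ℝ, 0 ≤ l → f xs + l * g xs ≤ f xs + ls * g xs)
    (hsaddle₂ : ∀ x : X, f xs + ls * g xs ≤ f x + ls * g x) (hκls : ls ≤ κ) :
    IsLeast (Set.range fun x => f x + κ * max 0 (g x)) (f xs) := by
  obtain ⟨hfeas, hslack⟩ := saddle_feasible_and_slack hls hsaddle₁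
  refine ⟨⟨xs, by simp [max_eq_left hfeas]⟩, ?_⟩
  rintro _ ⟨x, rfl⟩
  linarith [hsaddle₂ x, mul_le_mul_max_zero_s10 (t := g x) hls hκls]

end Saddle

theorem exact_penalty_value_equality_general
    {X : Type*} (f g : X → ℝ) (κ : ℝ)
    (xs : X) (ls : ℝ) (hls : 0 ≤ ls)
    (hsaddle₁ : ∀ l : ℝ, 0 ≤ l → f xs + l * g xs ≤ f xs + ls * g xs)
    (hsaddle₂ : ∀ x : X, f xs + ls * g xs ≤ f x + ls * g x)
    (hκls : ls ≤ κ) :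
    (⨅ x : X, f x + κ * max 0 (g x)) = f xs + ls * g xs ∧
      f xs + ls * g xs = f xs ∧
      f xs + κ * max 0 (g xs) = ⨅ x : X, f x + κ * max 0 (g x) := by
  obtain ⟨hfeas, hslack⟩ := saddle_feasible_and_slack hls hsaddle₁
  have hinf : (⨅ x : X, f x + κ * max 0 (g x)) = f xs :=
    (isLeast_range_exact_penalty hls hsaddle₁ hsaddle₂ hκls).csInf_eq
  refine ⟨by rw [hinf, hslack, add_zero], by rw [hslack, add_zero], ?_⟩
  rw [hinf, max_eq_left hfeas, mul_zero, add_zero]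

/-- Value-equality form of Proposition 2: with a saddle point `(x*, λ*)` of
the Lagrangian and a penalty factor `κ ≥ λ*`, the optimal value of the
exact-penalty problem equals `L(x*, λ*) = f(x*)` and is attained at `x*`. -/
theorem exact_penalty_value_equality
    {X : Type*} [Nonempty X] (f g : X → ℝ) (κ : ℝ) (hκ : 0 ≤ κ)
    (xs : X) (ls : ℝ) (hls : 0 ≤ ls)
    (hsaddle₁ : ∀ l : ℝ, 0 ≤ l → f xs + l * g xs ≤ f xs + ls * g xs)
    (hsaddle₂ : ∀ x : X, f xs + ls * g xs ≤ f x + ls * g x)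
    (hκls : ls ≤ κ) :
    (⨅ x : X, f x + κ * max 0 (g x)) = f xs + ls * g xs ∧
      f xs + ls * g xs = f xs ∧
      f xs + κ * max 0 (g xs) = ⨅ x : X, f x + κ * max 0 (g x) :=
  exact_penalty_value_equality_general f g κ xs ls hls hsaddle₁ hsaddle₂ hκls
end
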